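/- arXiv:0809.1701 — 4 statements merged into one kernel-verified Lean document; each statement's English description precedes it below -/
import Mathlib

section
/- Let n ≥ 1 and let s < ⌈2^n/(n+1)⌉ be a natural number. In the n-fold tensor power ⨂_{i∈Fin n} ℂ², the closure (in the canonical topology of this finite-dimensional complex vector space) of the set of all tensors expressible as a sum of s decomposable tensors is a proper subset of the whole space; hence a generic tensor of format 2×⋯×2 (n times) cannot be written as a sum of fewer than ⌈2^n/(n+1)⌉ decomposable tensors. -/
open scoped TensorProduct

open MvPolynomial Cardinal

/-!
In the basis of tensor products of standard basis vectors, the `2 ^ n` coordinates of a sum of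
`s` decomposable tensors whose factors have nonzero first entries are polynomials in
`s * (n + 1)` parameters: after rescaling every factor to `(1, x)`, one scale and `n` ratios per
summand. When `s * (n + 1) < 2 ^ n`, these `2 ^ n` polynomials exceed the transcendence degree
of the parameter ring, so a nonzero polynomial `P` annihilates them. Then `P` vanishes on the
coordinates of every sum of `s` decomposable tensors with nonzero first entries, hence of every
such sum (a polynomial vanishing on a box with infinite sides is zero), hence on the closure of
this set; but `P` does not vanish everywhere.
-/

universe u v

theorem MvPolynomial.exists_ne_zero_aeval_eq_zero_of_mk_lt {R : Type u} {σ ι : Type v}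
    [CommRing R] [IsDomain R] (F : ι → MvPolynomial σ R) (h : #σ < #ι) :
    ∃ P : MvPolynomial ι R, P ≠ 0 ∧ aeval F P = 0 := by
  by_contra! hF
  have hind : AlgebraicIndependent R F :=
    algebraicIndependent_iff.mpr fun P hP => by_contra fun hP0 => hF P hP0 hP
  have hle := hind.lift_cardinalMk_le_trdeg
  rw [trdeg_of_isDomain, lift_lift, lift_le] at hle
  exact hle.not_gt h

theorem MvPolynomial.eval_aeval {R σ τ : Type*} [CommSemiring R] (x : τ → R)
    (G : σ → MvPolynomial τ R) (P : MvPolynomial σ R) :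
    eval x (aeval G P) = eval (fun g => eval x (G g)) P := by
  rw [aeval_eq_bind₁]
  exact aeval_bind₁ x G P

section TensorCoords

variable (R ι κ : Type*) [CommSemiring R] [Fintype ι] [Fintype κ]

noncomputable def tensorCoords : (⨂[R] _i : ι, (κ → R)) ≃ₗ[R] ((ι → κ) → R) :=
  (Basis.piTensorProduct fun _ => Pi.basisFun R κ).equivFun

variable {R ι κ}

@[simp]
theorem tensorCoords_tprod (v : ι → κ → R) (g : ι → κ) :
    tensorCoords R ι κ (PiTensorProduct.tprod R v) g = ∏ j, v j (g j) := by
  simp [tensorCoords]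

end TensorCoords

section SumTprod

variable (R : Type*) [CommSemiring R] (n s : ℕ)

noncomputable def sumTprodCoord (g : Fin n → Fin 2) : MvPolynomial (Fin s × Fin n × Fin 2) R :=
  ∑ i, ∏ j, X (i, j, g j)

noncomputable def normalizedSumTprodCoord (g : Fin n → Fin 2) :
    MvPolynomial (Fin s × Option (Fin n)) R :=
  ∑ i, X (i, none) * ∏ j, X (i, some j) ^ (g j : ℕ)

variable {R n s}

theorem eval_sumTprodCoord (x : Fin s × Fin n × Fin 2 → R) (g : Fin n → Fin 2) :
    eval x (sumTprodCoord R n s g) = ∑ i, ∏ j, x (i, j, g j) := by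
  simp [sumTprodCoord]

variable {K : Type*} [Field K]

-- Each factor `v i j` is rescaled to `(1, v i j 1 / v i j 0)`, the scales collected in `(i, none)`.
def normalizedParams (v : Fin s → Fin n → Fin 2 → K) : Fin s × Option (Fin n) → K
  | (i, none) => ∏ j, v i j 0
  | (i, some j) => v i j 1 / v i j 0

theorem eval_normalizedSumTprodCoord {v : Fin s → Fin n → Fin 2 → K} (hv : ∀ i j, v i j 0 ≠ 0)
    (g : Fin n → Fin 2) :
    eval (normalizedParams v) (normalizedSumTprodCoord K n s g) = ∑ i, ∏ j, v i j (g j) := by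
  simp only [normalizedSumTprodCoord, map_sum, map_mul, map_prod, map_pow, eval_X,
    normalizedParams, ← Finset.prod_mul_distrib]
  refine Finset.sum_congr rfl fun i _ => Finset.prod_congr rfl fun j _ => ?_
  have hk : ∀ k : Fin 2, v i j 0 * (v i j 1 / v i j 0) ^ (k : ℕ) = v i j k := by
    simp [Fin.forall_fin_two, mul_div_cancel₀ _ (hv i j)]
  exact hk (g j)

end SumTprod

theorem exists_ne_zero_eval_sum_prod_eq_zero (K : Type*) [Field K] [Infinite K] {n s : ℕ}
    (h : s * (n + 1) < 2 ^ n) :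
    ∃ P : MvPolynomial (Fin n → Fin 2) K, P ≠ 0 ∧
      ∀ v : Fin s → Fin n → Fin 2 → K, eval (fun g => ∑ i, ∏ j, v i j (g j)) P = 0 := by
  obtain ⟨P, hP0, hP⟩ := exists_ne_zero_aeval_eq_zero_of_mk_lt
    (normalizedSumTprodCoord K n s) (by simpa using (Nat.cast_lt (α := Cardinal)).mpr h)
  suffices hQ : aeval (sumTprodCoord K n s) P = 0 by
    refine ⟨P, hP0, fun v => ?_⟩
    have := congr_arg (eval fun p => v p.1 p.2.1 p.2.2) hQ
    simpa only [eval_aeval, map_zero, eval_sumTprodCoord] using this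
  refine funext_set (fun _ => {0}ᶜ) (fun _ => (Set.finite_singleton 0).infinite_compl)
    fun x hx => ?_
  have hv : ∀ i j, x (i, j, 0) ≠ 0 := fun i j => hx (i, j, 0) trivial
  have hnormalize : ∀ g, eval x (sumTprodCoord K n s g) =
      eval (normalizedParams fun i j k => x (i, j, k)) (normalizedSumTprodCoord K n s g) := by
    intro g
    rw [eval_normalizedSumTprodCoord hv, eval_sumTprodCoord]
  rw [map_zero, eval_aeval]
  simp only [hnormalize, ← eval_aeval, hP, map_zero]

theorem stmt4_general (n : ℕ) (s : ℕ)
    (hs : (s : ℤ) < ⌈(2 ^ n : ℚ) / (n + 1)⌉) :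
    letI : TopologicalSpace (⨂[ℂ] _i : Fin n, (Fin 2 → ℂ)) :=
      moduleTopology ℂ _
    closure {T : ⨂[ℂ] _i : Fin n, (Fin 2 → ℂ) |
        ∃ v : Fin s → Fin n → (Fin 2 → ℂ),
          T = ∑ i, PiTensorProduct.tprod ℂ (fun j => v i j)}
      ≠ Set.univ := by
  let : TopologicalSpace (⨂[ℂ] _i : Fin n, (Fin 2 → ℂ)) := moduleTopology ℂ _
  have : IsModuleTopology ℂ (⨂[ℂ] _i : Fin n, (Fin 2 → ℂ)) := ⟨rfl⟩
  have hlt : s * (n + 1) < 2 ^ n := by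
    rw [Int.lt_ceil, lt_div_iff₀ (by positivity)] at hs
    exact_mod_cast hs
  obtain ⟨P, hP0, hP⟩ := exists_ne_zero_eval_sum_prod_eq_zero ℂ hlt
  obtain ⟨y, hy⟩ : ∃ y, eval y P ≠ 0 := by
    by_contra! h
    exact hP0 (MvPolynomial.funext fun y => by simp [h])
  set coords := tensorCoords ℂ (Fin n) (Fin 2)
  have hclosed : IsClosed {T | eval (coords T) P = 0} :=
    isClosed_eq ((continuous_eval P).comp
      (IsModuleTopology.continuous_of_linearMap coords.toLinearMap)) continuous_const
  refine (Set.ne_univ_iff_exists_notMem _).mpr ⟨coords.symm y, fun hmem => hy ?_⟩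
  have hvanish := closure_minimal (t := {T | eval (coords T) P = 0}) ?_ hclosed hmem
  · simpa using hvanish
  · rintro _ ⟨v, rfl⟩
    simpa [coords, map_sum, Finset.sum_fn] using hP v

/-- A generic 2 × ⋯ × 2 tensor (n times) is NOT the sum of fewer than
⌈2^n/(n+1)⌉ decomposable tensors: for `s < ⌈2^n/(n+1)⌉` the closure of the set
of sums of `s` decomposable tensors, in the canonical topology of the
finite-dimensional complex vector space `⨂[ℂ] i : Fin n, (Fin 2 → ℂ)`,
is a proper subset of the whole space. -/
theorem stmt4 (n : ℕ) (hn : 1 ≤ n) (s : ℕ)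
    (hs : (s : ℤ) < ⌈(2 ^ n : ℚ) / (n + 1)⌉) :
    letI : TopologicalSpace (⨂[ℂ] _i : Fin n, (Fin 2 → ℂ)) :=
      moduleTopology ℂ _
    closure {T : ⨂[ℂ] _i : Fin n, (Fin 2 → ℂ) |
        ∃ v : Fin s → Fin n → (Fin 2 → ℂ),
          T = ∑ i, PiTensorProduct.tprod ℂ (fun j => v i j)}
      ≠ Set.univ :=
  stmt4_general n s hs
end

section
/- Let n ≥ 2 and m > n be natural numbers, and let Q_1,…,Q_{n+1} ∈ ℂ^{n+1} be linearly independent vectors. If F is a form of degree m+1 in n+1 variables that vanishes to order ≥ m at each of the n+1 points [Q_j], then F = 0. -/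
open MvPolynomial

/-- Composition of partial derivatives along a list of variable indices. -/
noncomputable def derivMap {N : ℕ} (l : List (Fin N)) :
    MvPolynomial (Fin N) ℂ →ₗ[ℂ] MvPolynomial (Fin N) ℂ :=
  l.foldr (fun i f => (pderiv i).toLinearMap.comp f) LinearMap.id

/-- The subspace of polynomials vanishing to order ≥ k at the point `a`,
i.e. all iterated partial derivatives of total order ≤ k-1 vanish at `a`. -/
noncomputable def vanishingSubmodule {N : ℕ} (a : Fin N → ℂ) (k : ℕ) :
    Submodule ℂ (MvPolynomial (Fin N) ℂ) :=
  ⨅ (l : List (Fin N)) (_ : l.length < k),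
    LinearMap.ker ((aeval a).toLinearMap.comp (derivMap l))

/-!
Let `L` be the matrix whose columns are the `Q j`. The linear substitution `X ↦ L X` turns `F` into
a form `G` of the same degree that vanishes to order `m` at the coordinate points `e_j`, and `F` is
recovered from `G` because `L` is invertible. At `e_j`, vanishing to order `k` kills every monomial
`x^α` of a form of degree `d` with `d < α_j + k`: differentiating away the variables other than
`x_j` leaves a pure power of `x_j`, whose value at `e_j` is its coefficient. Hence every monomial of
`G` has all exponents `≤ 1`, so degree `≤ n + 1 < m + 1`, and `G = 0`.
-/

namespace MvPolynomial

variable {R σ τ : Type*} [CommSemiring R] [Fintype σ]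

theorem pderiv_aeval (g : σ → MvPolynomial τ R) (k : τ) (p : MvPolynomial σ R) :
    pderiv k (aeval g p) = ∑ i, pderiv k (g i) * aeval g (pderiv i p) := by
  classical
  induction p using MvPolynomial.induction_on with
  | C a => simp
  | add p q hp hq => simp only [map_add, hp, hq, mul_add, Finset.sum_add_distrib]
  | mul_X p i hp =>
    simp only [map_mul, aeval_X, pderiv_mul, hp, pderiv_X, map_add, mul_add,
      Finset.sum_add_distrib, Pi.single_apply, apply_ite (aeval g), map_zero,
      mul_ite, mul_one, mul_zero, Finset.sum_ite_eq, Finset.mem_univ, if_true]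
    simp only [← mul_assoc, ← Finset.sum_mul]
    ring

theorem IsHomogeneous.eval_piSingle_one [DecidableEq σ] {q : MvPolynomial σ R} {d : ℕ} (hq : q.IsHomogeneous d) (j : σ) :
    eval (Pi.single j 1 : σ → R) q = coeff (Finsupp.single j d) q := by
  rw [eval_eq', Finset.sum_eq_single (Finsupp.single j d)]
  · rw [Finset.prod_eq_one, mul_one]
    intro i _
    rcases eq_or_ne i j with rfl | hij
    · simp
    · simp [hij]
  · intro γ hγ hne
    obtain ⟨i, hij, hi⟩ : ∃ i ≠ j, γ i ≠ 0 := by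
      by_contra! h
      have hγj : γ = Finsupp.single j (γ j) := by
        ext i
        rcases eq_or_ne i j with rfl | hij
        · simp
        · simp [hij, h i hij]
      have hdeg : γ.degree = d := by_contra fun h => mem_support_iff.mp hγ (hq.coeff_eq_zero h)
      rw [hγj, Finsupp.degree_single] at hdeg
      exact hne (hdeg ▸ hγj)
    rw [Finset.prod_eq_zero (Finset.mem_univ i) (by simp [hij, hi]), mul_zero]
  · intro h
    rw [notMem_support_iff.mp h, zero_mul]

open Matrix

noncomputable def linearSubst (L : Matrix σ σ R) : MvPolynomial σ R →ₐ[R] MvPolynomial σ R :=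
  aeval fun i => ∑ j, C (L i j) * X j

theorem aeval_linearSubst (L : Matrix σ σ R) (a : σ → R) (p : MvPolynomial σ R) :
    aeval a (linearSubst L p) = aeval (L *ᵥ a) p := by
  rw [linearSubst, ← AlgHom.comp_apply, comp_aeval]
  congr 2
  ext i
  simp [Matrix.mulVec, dotProduct]

theorem pderiv_linearSubst (L : Matrix σ σ R) (k : σ) (p : MvPolynomial σ R) :
    pderiv k (linearSubst L p) = ∑ i, C (L i k) * linearSubst L (pderiv i p) := by
  classical
  rw [linearSubst, pderiv_aeval]
  congr! 2 with i
  simp [pderiv_X, Pi.single_apply]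

theorem linearSubst_linearSubst (L M : Matrix σ σ R) (p : MvPolynomial σ R) :
    linearSubst M (linearSubst L p) = linearSubst (L * M) p := by
  rw [← AlgHom.comp_apply]
  congr 1
  refine algHom_ext fun i => ?_
  simp [linearSubst, Matrix.mul_apply, Finset.mul_sum, Finset.sum_mul, ← mul_assoc]
  exact Finset.sum_comm

theorem linearSubst_one [DecidableEq σ] : linearSubst (1 : Matrix σ σ R) = AlgHom.id R _ := by
  ext i
  simp [linearSubst, Matrix.one_apply]

theorem linearSubst_injective [DecidableEq σ] {L : Matrix σ σ R} (hL : IsUnit L) :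
    Function.Injective (linearSubst L) := by
  obtain ⟨M, hLM⟩ := hL.exists_right_inv
  refine Function.LeftInverse.injective (g := linearSubst M) fun p => ?_
  rw [linearSubst_linearSubst, hLM, linearSubst_one, AlgHom.id_apply]

theorem IsHomogeneous.linearSubst {F : MvPolynomial σ R} {d : ℕ} (hF : F.IsHomogeneous d)
    (L : Matrix σ σ R) : (linearSubst L F).IsHomogeneous d := by
  have h := hF.aeval (fun i => ∑ j, C (L i j) * X j) fun i =>
    IsHomogeneous.sum _ _ _ fun j _ => isHomogeneous_C_mul_X (L i j) j
  rwa [one_mul] at h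

end MvPolynomial

section Vanishing

variable {N : ℕ}

theorem derivMap_append_singleton (l : List (Fin N)) (i : Fin N) (p : MvPolynomial (Fin N) ℂ) :
    derivMap (l ++ [i]) p = derivMap l (pderiv i p) := by
  induction l with
  | nil => rfl
  | cons j l ih => exact congrArg (pderiv j) ih

theorem mem_vanishingSubmodule_iff (a : Fin N → ℂ) (k : ℕ) (p : MvPolynomial (Fin N) ℂ) :
    p ∈ vanishingSubmodule a k ↔ ∀ l : List (Fin N), l.length < k → aeval a (derivMap l p) = 0 := by
  simp [vanishingSubmodule, Submodule.mem_iInf]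

theorem mem_vanishingSubmodule_zero (a : Fin N → ℂ) (p : MvPolynomial (Fin N) ℂ) :
    p ∈ vanishingSubmodule a 0 := by
  simp [mem_vanishingSubmodule_iff]

theorem mem_vanishingSubmodule_succ_iff (a : Fin N → ℂ) (k : ℕ) (p : MvPolynomial (Fin N) ℂ) :
    p ∈ vanishingSubmodule a (k + 1) ↔
      aeval a p = 0 ∧ ∀ i, pderiv i p ∈ vanishingSubmodule a k := by
  simp only [mem_vanishingSubmodule_iff]
  constructor
  · intro h
    refine ⟨h [] k.succ_pos, fun i l hl => ?_⟩
    rw [← derivMap_append_singleton]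
    exact h _ (by simpa using hl)
  · rintro ⟨h₀, h⟩ l hl
    rcases l.eq_nil_or_concat with rfl | ⟨l, i, rfl⟩
    · exact h₀
    · rw [List.concat_eq_append, derivMap_append_singleton]
      exact h i l (by simpa using hl)

open Matrix in
theorem linearSubst_mem_vanishingSubmodule (L : Matrix (Fin N) (Fin N) ℂ) (a : Fin N → ℂ)
    {k : ℕ} {p : MvPolynomial (Fin N) ℂ} (hp : p ∈ vanishingSubmodule (L *ᵥ a) k) :
    linearSubst L p ∈ vanishingSubmodule a k := by
  induction k generalizing p with
  | zero => exact mem_vanishingSubmodule_zero a _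
  | succ k ih =>
    rw [mem_vanishingSubmodule_succ_iff] at hp ⊢
    refine ⟨by rw [aeval_linearSubst, hp.1], fun i => ?_⟩
    rw [pderiv_linearSubst]
    exact Submodule.sum_mem _ fun j _ => by
      rw [← smul_eq_C_mul]
      exact Submodule.smul_mem _ _ (ih (hp.2 j))

theorem coeff_eq_zero_of_mem_vanishingSubmodule_single {G : MvPolynomial (Fin N) ℂ} {d k : ℕ}
    (hG : G.IsHomogeneous d) {j : Fin N} (hvan : G ∈ vanishingSubmodule (Pi.single j 1) k)
    (α : Fin N →₀ ℕ) (hα : d < α j + k) : coeff α G = 0 := by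
  by_cases hdeg : α.degree = d
  swap
  · exact hG.coeff_eq_zero hdeg
  induction k generalizing G d α with
  | zero => have := α.le_degree j; omega
  | succ k ih =>
    rw [mem_vanishingSubmodule_succ_iff] at hvan
    by_cases hsupp : ∃ i ≠ j, α i ≠ 0
    · obtain ⟨i, hij, hi⟩ := hsupp
      obtain ⟨γ, hγα⟩ : ∃ γ, γ + Finsupp.single i 1 = α :=
        ⟨_, tsub_add_cancel_of_le (Finsupp.single_le_iff.2 (Nat.one_le_iff_ne_zero.2 hi))⟩
      have hγj : γ j = α j := by simp [← hγα, hij.symm]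
      have hγdeg : γ.degree = d - 1 := by
        rw [← hdeg, ← hγα, map_add, Finsupp.degree_single, Nat.add_sub_cancel]
      have hαi := α.le_degree i
      have h := ih hG.pderiv (hvan.2 i) γ (by omega) hγdeg
      rw [coeff_pderiv, hγα] at h
      exact (mul_eq_zero.mp h).resolve_right (by norm_cast)
    · push Not at hsupp
      have hαj : α = Finsupp.single j d := by
        ext i
        rcases eq_or_ne i j with rfl | hij
        · simpa [Finsupp.degree_eq_sum, Finset.sum_eq_single i fun i' _ h => hsupp i' h] using hdeg
        · simp [hij, hsupp i hij]
      rw [hαj, ← hG.eval_piSingle_one]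
      simpa using hvan.1

theorem eq_zero_of_forall_mem_vanishingSubmodule_single {G : MvPolynomial (Fin N) ℂ} {d k : ℕ}
    (hG : G.IsHomogeneous d) (hvan : ∀ j, G ∈ vanishingSubmodule (Pi.single j 1) k)
    (hd : N * (d - k) < d) : G = 0 := by
  ext α
  rw [coeff_zero]
  by_contra hα
  have hdeg : α.degree = d := by_contra fun h => hα (hG.coeff_eq_zero h)
  have hle : ∀ j, α j ≤ d - k := fun j => by
    by_contra h
    exact hα (coeff_eq_zero_of_mem_vanishingSubmodule_single hG (hvan j) α (by omega))
  have : α.degree ≤ N * (d - k) := by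
    rw [Finsupp.degree_eq_sum]
    simpa using Finset.sum_le_sum fun j (_ : j ∈ Finset.univ) => hle j
  omega

end Vanishing

theorem stmt5_general (n m : ℕ) (hm : n < m)
    (Q : Fin (n + 1) → (Fin (n + 1) → ℂ)) (hQ : LinearIndependent ℂ Q)
    (F : MvPolynomial (Fin (n + 1)) ℂ) (hF : F.IsHomogeneous (m + 1))
    (hvan : ∀ j, F ∈ vanishingSubmodule (Q j) m) :
    F = 0 := by
  set L : Matrix (Fin (n + 1)) (Fin (n + 1)) ℂ := Matrix.of fun i j => Q j i
  have hLQ : ∀ j, L.mulVec (Pi.single j 1) = Q j := fun j => by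
    ext i; simp [L]
  have hL : IsUnit L := Matrix.linearIndependent_cols_iff_isUnit.mp hQ
  have hsubst : linearSubst L F = 0 :=
    eq_zero_of_forall_mem_vanishingSubmodule_single (hF.linearSubst L)
      (fun j => linearSubst_mem_vanishingSubmodule L _ (hLQ j ▸ hvan j))
      (by rw [Nat.add_sub_cancel_left, mul_one]; omega)
  exact linearSubst_injective hL (hsubst.trans (map_zero _).symm)

theorem stmt5 (n m : ℕ) (hn : 2 ≤ n) (hm : n < m)
    (Q : Fin (n + 1) → (Fin (n + 1) → ℂ)) (hQ : LinearIndependent ℂ Q)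
    (F : MvPolynomial (Fin (n + 1)) ℂ) (hF : F.IsHomogeneous (m + 1))
    (hvan : ∀ j, F ∈ vanishingSubmodule (Q j) m) :
    F = 0 :=
  stmt5_general n m hm Q hQ F hF hvan
end

section
/- Let m ≥ 3 and x ≥ 1 be natural numbers, let V be a ℂ-linear subspace of the space of forms of degree m in m+1 variables, and let W_1,…,W_x ⊆ ℂ^{m+1} be planes (3-dimensional linear subspaces). Suppose there exist nonzero vectors R_1 ∈ W_1, …, R_x ∈ W_x such that the subspace { F ∈ V : F vanishes to order ≥ 2 at each [R_i] } has dimension dim V − x(m+1). Then there exist nonzero vectors P_{i,1}, P_{i,2} ∈ W_i (1 ≤ i ≤ x) such that the subspace { F ∈ V : F(P_{i,1}) = F(P_{i,2}) = 0 for all i } has dimension dim V − 2x. -/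
open MvPolynomial

/-!
By Euler's identity `∑ⱼ aⱼ ∂ⱼF(a) = m F(a)`, a form of degree `m ≠ 0` vanishes to order two at `a`
exactly when its gradient vanishes there, so the dimension hypothesis says that
`F ↦ (∇F(Rᵢ))ᵢ` maps `V` onto `(ℂ^{m+1})^x`. Pick `vᵢ ∈ Wᵢ` independent of `Rᵢ`; since `F(Rᵢ)` and
the directional derivative `∂_{vᵢ}F(Rᵢ)` are independent linear forms in the gradient, `V` maps
onto `ℂ^{2x}` by `F ↦ (F(Rᵢ), ∂_{vᵢ}F(Rᵢ))ᵢ`. The difference quotient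
`(F(Rᵢ + t vᵢ) - F(Rᵢ)) / t` is a polynomial in `t` with value `∂_{vᵢ}F(Rᵢ)` at `t = 0`, so the
determinant of these maps on a suitable `2x`-dimensional subspace of `V` is a polynomial in `t`
equal to `1` at `0`, hence nonzero at some `t ≠ 0`. For that `t` the evaluations at the points
`Rᵢ` and `Rᵢ + t vᵢ` of `Wᵢ` map `V` onto `ℂ^{2x}`: they are `2x` independent conditions.
-/

theorem Polynomial.exists_ne_zero_eval_ne_zero {K : Type*} [Field K] [Infinite K] {p : Polynomial K}
    (hp : p ≠ 0) : ∃ t ≠ 0, p.eval t ≠ 0 := by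
  classical
  obtain ⟨t, ht⟩ := Infinite.exists_notMem_finset (insert 0 p.roots.toFinset)
  simp only [Finset.mem_insert, Multiset.mem_toFinset, mem_roots hp, IsRoot.def, not_or] at ht
  exact ⟨t, ht⟩

noncomputable def Polynomial.divXₗ (R : Type*) [Semiring R] : Polynomial R →ₗ[R] Polynomial R where
  toFun := Polynomial.divX
  map_add' _ _ := Polynomial.divX_add
  map_smul' c p := by simp [Polynomial.smul_eq_C_mul, Polynomial.divX_C_mul]

theorem Submodule.exists_linearIndependent_pair_of_one_lt_finrank {K M : Type*} [Field K]
    [AddCommGroup M] [Module K M] {W : Submodule K M} (hW : 1 < Module.finrank K W) {x : M}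
    (hxW : x ∈ W) (hx : x ≠ 0) : ∃ y ∈ W, LinearIndependent K ![x, y] := by
  obtain ⟨y, hy⟩ := _root_.exists_linearIndependent_pair_of_one_lt_finrank hW (x := ⟨x, hxW⟩)
    (by simp [hx])
  refine ⟨y, y.2, ?_⟩
  have hmap := hy.map' W.subtype W.ker_subtype
  rwa [show W.subtype ∘ ![⟨x, hxW⟩, y] = ![x, (y : M)] by ext k; fin_cases k <;> rfl] at hmap

theorem Matrix.mulVec_surjective_of_linearIndependent_row {K m n : Type*} [Field K] [Fintype m]
    [Fintype n] {A : Matrix m n K} (hA : LinearIndependent K A.row) :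
    Function.Surjective A.mulVec := by
  change Function.Surjective A.mulVecLin
  rw [← LinearMap.range_eq_top]
  apply Submodule.eq_top_of_finrank_eq
  rw [← Matrix.rank, hA.rank_matrix, Module.finrank_fintype_fun_eq_card]

namespace Submodule

variable {K M ι : Type*} [Field K] [AddCommGroup M] [Module K M] [Fintype ι]

theorem surjective_iff_finrank_inf_iInf_ker_add_card (V : Submodule K M) [FiniteDimensional K V]
    (φ : ι → M →ₗ[K] K) :
    Function.Surjective (fun F : V => fun q => φ q F) ↔
      Module.finrank K ↥(V ⊓ ⨅ q, LinearMap.ker (φ q)) + Fintype.card ι = Module.finrank K V := by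
  let L : V →ₗ[K] ι → K := LinearMap.pi fun q => φ q ∘ₗ V.subtype
  have hker : LinearMap.ker L = comap V.subtype (⨅ q, LinearMap.ker (φ q)) := by
    ext F
    simp [L, mem_iInf, funext_iff]
  have hfinrank_ker : Module.finrank K (LinearMap.ker L) =
      Module.finrank K ↥(V ⊓ ⨅ q, LinearMap.ker (φ q)) := by
    rw [← map_comap_subtype, ← hker, finrank_map_subtype_eq]
  have hrank := L.finrank_range_add_finrank_ker
  change Function.Surjective L ↔ _
  rw [← LinearMap.range_eq_top, ← hfinrank_ker, ← hrank, add_comm, add_right_cancel_iff,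
    ← Module.finrank_fintype_fun_eq_card (R := K)]
  exact ⟨fun h => by rw [h, finrank_top], fun h => eq_top_of_finrank_eq h.symm⟩

end Submodule

theorem exists_ne_zero_surjective_eval_of_surjective_eval_zero {K V ι : Type*} [Field K]
    [Infinite K] [AddCommGroup V] [Module K V] [Fintype ι] [DecidableEq ι] (f : V →ₗ[K] ι → Polynomial K)
    (h0 : Function.Surjective fun F q => (f F q).eval 0) :
    ∃ t ≠ 0, Function.Surjective fun F q => (f F q).eval t := by
  choose F hF using fun k => h0 (Pi.single k 1)
  let A : Matrix ι ι (Polynomial K) := Matrix.of fun q k => f (F k) q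
  have hA0 : A.map (Polynomial.evalRingHom 0) = 1 := by
    ext q k
    simpa [A, Matrix.one_apply, Pi.single_apply] using congrFun (hF k) q
  have hdet0 : A.det.eval 0 = 1 := by
    rw [← Polynomial.coe_evalRingHom, RingHom.map_det, RingHom.mapMatrix_apply, hA0, Matrix.det_one]
  obtain ⟨t, ht0, hdet⟩ := Polynomial.exists_ne_zero_eval_ne_zero (p := A.det)
    fun h => by simp [h] at hdet0
  let M := A.map (Polynomial.evalRingHom t)
  have hM : IsUnit M := by
    rw [Matrix.isUnit_iff_isUnit_det]
    change IsUnit ((Polynomial.evalRingHom t).mapMatrix A).det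
    rw [← RingHom.map_det]
    exact hdet.isUnit
  have hcomb : (fun F q => (f F q).eval t) ∘ (fun w => ∑ k, w k • F k) = M.mulVec := by
    funext w q
    simp [M, A, Matrix.mulVec, dotProduct, Polynomial.eval_finsetSum, mul_comm]
  refine ⟨t, ht0, Function.Surjective.of_comp (g := fun w : ι → K => ∑ k, w k • F k) ?_⟩
  rw [hcomb]
  exact Matrix.mulVec_surjective_iff_isUnit.mpr hM

namespace MvPolynomial

variable {R σ : Type*} [CommRing R]

noncomputable def restrictToLine (a v : σ → R) : MvPolynomial σ R →ₐ[R] Polynomial R :=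
  aeval fun j => Polynomial.C (a j) + Polynomial.C (v j) * Polynomial.X

theorem eval_restrictToLine (a v : σ → R) (F : MvPolynomial σ R) (t : R) :
    (restrictToLine a v F).eval t = aeval (a + t • v) F := by
  rw [restrictToLine, ← Polynomial.coe_aeval_eq_eval, ← AlgHom.comp_apply, comp_aeval]
  congr 2
  ext j
  simp only [map_add, map_mul, Polynomial.aeval_C, Polynomial.aeval_X]
  simp [mul_comm]

theorem coeff_zero_restrictToLine (a v : σ → R) (F : MvPolynomial σ R) :
    (restrictToLine a v F).coeff 0 = aeval a F := by
  simp [Polynomial.coeff_zero_eq_eval_zero, eval_restrictToLine]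

theorem aeval_add_smul_eq (a v : σ → R) (F : MvPolynomial σ R) (t : R) :
    aeval (a + t • v) F = aeval a F + t * ((restrictToLine a v F).divX).eval t := by
  rw [← eval_restrictToLine]
  conv_lhs => rw [← Polynomial.X_mul_divX_add (restrictToLine a v F)]
  simp [coeff_zero_restrictToLine, add_comm]

variable [Fintype σ]

theorem derivative_restrictToLine (a v : σ → R) (F : MvPolynomial σ R) :
    Polynomial.derivative (restrictToLine a v F) =
      ∑ j, Polynomial.C (v j) * restrictToLine a v (pderiv j F) := by
  classical
  induction F using MvPolynomial.induction_on with
  | C c => simp [restrictToLine]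
  | add p q hp hq => simp [hp, hq, mul_add, Finset.sum_add_distrib]
  | mul_X p i hp =>
    simp only [map_mul, Polynomial.derivative_mul, hp, Derivation.leibniz, pderiv_X, smul_eq_mul,
      map_add, mul_add, Finset.sum_add_distrib, Finset.sum_mul]
    rw [add_comm]
    congr 1
    · rw [Finset.sum_eq_single i (fun j _ hj => by simp [hj.symm]) (by simp)]
      simp only [Pi.single_eq_same, map_one, mul_one, restrictToLine, aeval_X,
        Polynomial.derivative_add, Polynomial.derivative_C, Polynomial.derivative_C_mul_X, zero_add]
      ring
    · exact Finset.sum_congr rfl fun j _ => by ring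

theorem coeff_one_restrictToLine (a v : σ → R) (F : MvPolynomial σ R) :
    (restrictToLine a v F).coeff 1 = ∑ j, v j * aeval a (pderiv j F) := by
  have := congrArg (Polynomial.coeff · 0) (derivative_restrictToLine a v F)
  simpa [Polynomial.coeff_derivative, Polynomial.finsetSum_coeff, coeff_zero_restrictToLine]
    using this

theorem IsHomogeneous.aeval_sum_mul_pderiv {F : MvPolynomial σ R} {m : ℕ} (hF : F.IsHomogeneous m)
    (a : σ → R) : ∑ j, a j * MvPolynomial.aeval a (pderiv j F) = m * MvPolynomial.aeval a F := by
  simpa using congrArg (MvPolynomial.aeval a) hF.sum_X_mul_pderiv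

end MvPolynomial

theorem vanishingSubmodule_one {N : ℕ} (a : Fin N → ℂ) :
    vanishingSubmodule a 1 = LinearMap.ker (aeval a).toLinearMap := by
  ext F
  simp [vanishingSubmodule, derivMap]

theorem mem_vanishingSubmodule_two {N : ℕ} {a : Fin N → ℂ} {F : MvPolynomial (Fin N) ℂ} :
    F ∈ vanishingSubmodule a 2 ↔ aeval a F = 0 ∧ ∀ j, aeval a (pderiv j F) = 0 := by
  simp only [vanishingSubmodule, Submodule.mem_iInf, LinearMap.mem_ker]
  constructor
  · intro h
    exact ⟨by simpa [derivMap] using h [] (by simp),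
      fun j => by simpa [derivMap] using h [j] (by simp)⟩
  · rintro ⟨h0, h1⟩ (_ | ⟨j, _ | ⟨_, _⟩⟩) hl
    · simpa [derivMap] using h0
    · simpa [derivMap] using h1 j
    · simp at hl

section Forms

variable {N m : ℕ} {ι : Type*} {V : Submodule ℂ (MvPolynomial (Fin N) ℂ)}

theorem mem_vanishingSubmodule_two_iff_of_isHomogeneous (hm : m ≠ 0) {a : Fin N → ℂ}
    {F : MvPolynomial (Fin N) ℂ} (hF : F.IsHomogeneous m) :
    F ∈ vanishingSubmodule a 2 ↔ ∀ j, aeval a (pderiv j F) = 0 := by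
  rw [mem_vanishingSubmodule_two]
  refine ⟨And.right, fun h => ⟨?_, h⟩⟩
  have euler := hF.aeval_sum_mul_pderiv a
  simp only [h, mul_zero, Finset.sum_const_zero] at euler
  exact (mul_eq_zero.mp euler.symm).resolve_left (Nat.cast_ne_zero.mpr hm)

theorem inf_iInf_vanishingSubmodule_two (hm : m ≠ 0) (hV : V ≤ homogeneousSubmodule (Fin N) ℂ m)
    (R : ι → Fin N → ℂ) :
    V ⊓ ⨅ i, vanishingSubmodule (R i) 2 =
      V ⊓ ⨅ q : ι × Fin N,
        LinearMap.ker ((aeval (R q.1)).toLinearMap ∘ₗ (pderiv q.2).toLinearMap) := by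
  ext F
  simp only [Submodule.mem_inf, Submodule.mem_iInf, LinearMap.mem_ker, LinearMap.coe_comp,
    Function.comp_apply, AlgHom.toLinearMap_apply, Prod.forall]
  exact and_congr_right fun hF => forall_congr' fun i =>
    mem_vanishingSubmodule_two_iff_of_isHomogeneous hm (hV hF)

theorem surjective_gradient_of_finrank (hm : m ≠ 0) (hV : V ≤ homogeneousSubmodule (Fin N) ℂ m)
    [Fintype ι] [FiniteDimensional ℂ V] (R : ι → Fin N → ℂ)
    (h : Module.finrank ℂ ↥(V ⊓ ⨅ i, vanishingSubmodule (R i) 2) + Fintype.card ι * N =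
      Module.finrank ℂ V) :
    Function.Surjective fun (F : V) (q : ι × Fin N) => aeval (R q.1) (pderiv q.2 F.1) := by
  rw [inf_iInf_vanishingSubmodule_two hm hV] at h
  have hsurj := (V.surjective_iff_finrank_inf_iInf_ker_add_card
    fun q : ι × Fin N => (aeval (R q.1)).toLinearMap ∘ₗ (pderiv q.2).toLinearMap).mpr
    (by rwa [Fintype.card_prod, Fintype.card_fin])
  simpa only [LinearMap.coe_comp, Function.comp_apply, AlgHom.toLinearMap_apply,
    Derivation.coeFn_coe] using hsurj

theorem surjective_aeval_coeff_one_restrictToLine (hm : m ≠ 0)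
    (hV : V ≤ homogeneousSubmodule (Fin N) ℂ m) (R v : ι → Fin N → ℂ)
    (hRv : ∀ i, LinearIndependent ℂ ![R i, v i])
    (hgrad : Function.Surjective fun (F : V) (q : ι × Fin N) => aeval (R q.1) (pderiv q.2 F.1)) :
    Function.Surjective fun (F : V) (q : ι × Fin 2) =>
      ![aeval (R q.1) F.1, (restrictToLine (R q.1) (v q.1) F.1).coeff 1] q.2 := by
  intro c
  have hpair (i : ι) :
      ∃ g : Fin N → ℂ, (Matrix.of ![R i, v i]).mulVec g = ![m * c (i, 0), c (i, 1)] :=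
    Matrix.mulVec_surjective_of_linearIndependent_row (hRv i) _
  choose g hg using hpair
  obtain ⟨F, hF⟩ := hgrad fun q => g q.1 q.2
  have hFg (i : ι) (j : Fin N) : aeval (R i) (pderiv j F.1) = g i j := congrFun hF (i, j)
  refine ⟨F, funext fun ⟨i, k⟩ => ?_⟩
  have h0 := congrFun (hg i) 0
  have h1 := congrFun (hg i) 1
  simp only [Matrix.mulVec, dotProduct, Matrix.of_apply, Matrix.cons_val_zero, Matrix.cons_val_one,
    ← hFg] at h0 h1
  fin_cases k
  · have euler := (hV F.2).aeval_sum_mul_pderiv (R i)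
    exact mul_left_cancel₀ (Nat.cast_ne_zero.mpr hm) (euler.symm.trans h0)
  · simpa [coeff_one_restrictToLine] using h1

theorem exists_surjective_aeval_pair_on_lines [Fintype ι] (hm : m ≠ 0)
    (hV : V ≤ homogeneousSubmodule (Fin N) ℂ m) (R v : ι → Fin N → ℂ)
    (hRv : ∀ i, LinearIndependent ℂ ![R i, v i])
    (hgrad : Function.Surjective fun (F : V) (q : ι × Fin N) => aeval (R q.1) (pderiv q.2 F.1)) :
    ∃ t : ℂ, t ≠ 0 ∧ Function.Surjective fun (F : V) (q : ι × Fin 2) =>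
      aeval (![R q.1, R q.1 + t • v q.1] q.2) F.1 := by
  classical
  let f : V →ₗ[ℂ] ι × Fin 2 → Polynomial ℂ := LinearMap.pi fun q =>
    ![(Algebra.ofId ℂ _).toLinearMap ∘ₗ (aeval (R q.1)).toLinearMap,
      Polynomial.divXₗ ℂ ∘ₗ (restrictToLine (R q.1) (v q.1)).toLinearMap] q.2 ∘ₗ V.subtype
  have hf (F : V) (i : ι) : f F (i, 0) = Polynomial.C (aeval (R i) F.1) ∧
      f F (i, 1) = (restrictToLine (R i) (v i) F.1).divX := ⟨rfl, rfl⟩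
  have hf0 : (fun F q => (f F q).eval 0) =
      fun (F : V) (q : ι × Fin 2) =>
        ![aeval (R q.1) F.1, (restrictToLine (R q.1) (v q.1) F.1).coeff 1] q.2 := by
    funext F ⟨i, k⟩
    fin_cases k
    · simp [(hf F i).1]
    · simp [(hf F i).2, ← Polynomial.coeff_zero_eq_eval_zero, Polynomial.coeff_divX]
  obtain ⟨t, ht0, ht⟩ := exists_ne_zero_surjective_eval_of_surjective_eval_zero f
    (hf0 ▸ surjective_aeval_coeff_one_restrictToLine hm hV R v hRv hgrad)
  refine ⟨t, ht0, fun c => ?_⟩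
  obtain ⟨F, hF⟩ := ht fun q => ![c (q.1, 0), (c (q.1, 1) - c (q.1, 0)) / t] q.2
  refine ⟨F, funext fun ⟨i, k⟩ => ?_⟩
  have h0 := congrFun hF (i, 0)
  have h1 := congrFun hF (i, 1)
  simp only [(hf F i).1, (hf F i).2, Polynomial.eval_C, Matrix.cons_val_zero,
    Matrix.cons_val_one] at h0 h1
  fin_cases k
  · exact h0
  · change aeval (R i + t • v i) F.1 = c (i, 1)
    rw [aeval_add_smul_eq, h0, h1]
    field_simp
    ring

theorem finrank_inf_iInf_vanishingSubmodule_one_add_card {κ : Type*} [Fintype ι] [Fintype κ]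
    [FiniteDimensional ℂ V] (P : ι → κ → Fin N → ℂ)
    (h : Function.Surjective fun (F : V) (q : ι × κ) => aeval (P q.1 q.2) F.1) :
    Module.finrank ℂ ↥(V ⊓ ⨅ i, ⨅ j, vanishingSubmodule (P i j) 1) +
      Fintype.card ι * Fintype.card κ = Module.finrank ℂ V := by
  rw [show ⨅ i, ⨅ j, vanishingSubmodule (P i j) 1 =
      ⨅ q : ι × κ, LinearMap.ker (aeval (P q.1 q.2)).toLinearMap by
    simp only [vanishingSubmodule_one, iInf_prod], ← Fintype.card_prod]
  exact (V.surjective_iff_finrank_inf_iInf_ker_add_card _).mp h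

end Forms

theorem stmt7_general (m x : ℕ) (hm : 3 ≤ m)
    (V : Submodule ℂ (MvPolynomial (Fin (m + 1)) ℂ))
    (hV : V ≤ homogeneousSubmodule (Fin (m + 1)) ℂ m)
    (W : Fin x → Submodule ℂ (Fin (m + 1) → ℂ))
    (hW : ∀ i, Module.finrank ℂ (W i) = 3)
    (hexists : ∃ R : Fin x → (Fin (m + 1) → ℂ),
      (∀ i, R i ∈ W i) ∧ (∀ i, R i ≠ 0) ∧
      (Module.finrank ℂ ↥(V ⊓ ⨅ i, vanishingSubmodule (R i) 2) : ℤ)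
        = Module.finrank ℂ V - x * (m + 1)) :
    ∃ P : Fin x → Fin 2 → (Fin (m + 1) → ℂ),
      (∀ i j, P i j ∈ W i) ∧ (∀ i j, P i j ≠ 0) ∧
      (Module.finrank ℂ ↥(V ⊓ ⨅ i, ⨅ j, vanishingSubmodule (P i j) 1) : ℤ)
        = Module.finrank ℂ V - 2 * x := by
  obtain ⟨R, hRW, hR0, hdim⟩ := hexists
  have hm0 : m ≠ 0 := by omega
  have : FiniteDimensional ℂ (homogeneousSubmodule (Fin (m + 1)) ℂ m) :=
    Module.Finite.iff_fg.mpr (homogeneousSubmodule_fg (Fin (m + 1)) ℂ m)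
  have : FiniteDimensional ℂ V := Submodule.finiteDimensional_of_le hV
  choose v hvW hRv using fun i => (W i).exists_linearIndependent_pair_of_one_lt_finrank
    (by rw [hW i]; norm_num) (hRW i) (hR0 i)
  have hgrad := surjective_gradient_of_finrank hm0 hV R (by rw [Fintype.card_fin]; zify; linarith)
  obtain ⟨t, ht0, hsurj⟩ := exists_surjective_aeval_pair_on_lines hm0 hV R v hRv hgrad
  refine ⟨fun i => ![R i, R i + t • v i], fun i j => ?_, fun i j => ?_, ?_⟩
  · fin_cases j
    exacts [hRW i, add_mem (hRW i) (Submodule.smul_mem _ _ (hvW i))]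
  · fin_cases j
    · exact hR0 i
    · intro h
      simpa using LinearIndependent.pair_iff.mp (hRv i) 1 t (by simpa using h)
  · have hcodim := finrank_inf_iInf_vanishingSubmodule_one_add_card
      (fun i j => ![R i, R i + t • v i] j) hsurj
    rw [Fintype.card_fin, Fintype.card_fin, mul_comm] at hcodim
    exact eq_sub_of_add_eq (by exact_mod_cast hcodim)

theorem stmt7 (m x : ℕ) (hm : 3 ≤ m) (hx : 1 ≤ x)
    (V : Submodule ℂ (MvPolynomial (Fin (m + 1)) ℂ))
    (hV : V ≤ homogeneousSubmodule (Fin (m + 1)) ℂ m)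
    (W : Fin x → Submodule ℂ (Fin (m + 1) → ℂ))
    (hW : ∀ i, Module.finrank ℂ (W i) = 3)
    (hexists : ∃ R : Fin x → (Fin (m + 1) → ℂ),
      (∀ i, R i ∈ W i) ∧ (∀ i, R i ≠ 0) ∧
      (Module.finrank ℂ ↥(V ⊓ ⨅ i, vanishingSubmodule (R i) 2) : ℤ)
        = Module.finrank ℂ V - x * (m + 1)) :
    ∃ P : Fin x → Fin 2 → (Fin (m + 1) → ℂ),
      (∀ i j, P i j ∈ W i) ∧ (∀ i j, P i j ≠ 0) ∧
      (Module.finrank ℂ ↥(V ⊓ ⨅ i, ⨅ j, vanishingSubmodule (P i j) 1) : ℤ)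
        = Module.finrank ℂ V - 2 * x :=
  stmt7_general m x hm V hV W hW hexists
end

section
/- Let n ≥ 5 be a natural number, write n = 4q + r with q, r ∈ ℕ and 0 ≤ r ≤ 3, and suppose ⌈2^n/(n+1)⌉ is odd, say ⌈2^n/(n+1)⌉ = 2t* + 1 with t* ∈ ℕ. Then, as integers: (i) 2^{n−1} − 2(n−1)q − n(t* + 1 − 2q) − t* ≤ 0, and (ii) 2^{n−1} − 4q − n·t* − (t* + 1 − 2q) ≤ 0. -/
/-!
An odd number dividing `2 ^ n` is `1`, and `2 ^ n ≠ n + 1` for `n ≥ 2`; so the odd ceiling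
`2t + 1` of `2 ^ n / (n + 1)` is strictly above it, i.e. `2 ^ n + 1 ≤ (2t + 1)(n + 1)`.
With `s = 2 ^ (n - 1) - (n + 1) t` this says `2s ≤ n = 4q + r`, and the two expressions
reduce to `s - n + 2q` and `s - 2q - 1`, both `≤ 0` because `s` is an integer and `r ≤ 3`.
-/

theorem add_one_lt_two_pow {n : ℕ} (hn : 2 ≤ n) : n + 1 < 2 ^ n := by
  obtain ⟨k, rfl⟩ : ∃ k, n = k + 2 := ⟨n - 2, by omega⟩
  have := Nat.lt_two_pow_self (n := k)
  rw [pow_add]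
  omega

theorem two_pow_lt_mul_succ_of_ceil_eq_odd {n m : ℕ} (hn : 2 ≤ n) (hm : Odd m)
    (h : ⌈(2 ^ n : ℚ) / (n + 1)⌉ = m) : 2 ^ n < m * (n + 1) := by
  have hle : 2 ^ n ≤ m * (n + 1) := by
    have : (2 ^ n : ℚ) / (n + 1) ≤ m := by exact_mod_cast h ▸ Int.le_ceil _
    exact_mod_cast (div_le_iff₀ (by positivity)).mp this
  refine hle.lt_of_ne fun heq => ?_
  have hm1 : m = 1 :=
    Nat.Coprime.eq_one_of_dvd (Nat.coprime_two_right.mpr hm |>.pow_right n) ⟨n + 1, heq⟩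
  subst hm1
  have := add_one_lt_two_pow hn
  omega

theorem stmt19 (n q r t : ℕ) (hn : 5 ≤ n) (hnqr : n = 4 * q + r) (hr : r ≤ 3)
    (ht : ⌈(2 ^ n : ℚ) / (n + 1)⌉ = 2 * (t : ℤ) + 1) :
    (2 : ℤ) ^ (n - 1) - 2 * ((n : ℤ) - 1) * q - n * ((t : ℤ) + 1 - 2 * q) - t ≤ 0 ∧
    (2 : ℤ) ^ (n - 1) - 4 * (q : ℤ) - n * t - ((t : ℤ) + 1 - 2 * q) ≤ 0 := by
  have hlt : 2 ^ n < (2 * t + 1) * (n + 1) :=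
    two_pow_lt_mul_succ_of_ceil_eq_odd (by omega) (odd_two_mul_add_one t) (by exact_mod_cast ht)
  obtain ⟨s, hs⟩ : ∃ s : ℤ, s = 2 ^ (n - 1) - (n + 1) * t := ⟨_, rfl⟩
  have h2s : 2 * s ≤ n := by
    have hpow : (2 : ℤ) ^ n = 2 * 2 ^ (n - 1) := by
      rw [← pow_succ', Nat.sub_add_cancel (by omega)]
    zify at hlt
    linarith
  constructor
  · linear_combination (by omega : s - n + 2 * (q : ℤ) ≤ 0) - hs
  · linear_combination (by omega : s - 2 * (q : ℤ) - 1 ≤ 0) - hs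
end
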